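/- Let A ∈ {0,1}^{m×n} be a binary measurement matrix with no all-zero column, let T ⊆ V, set y = A·1_T and S = {v ∈ V∖T : N(v) ⊆ N(T)}. Suppose there exists a measurement node c* ∈ N(T) with N(c*) ∩ S = ∅ and |{v ∈ N_T(c*) : every c' ∈ N(v) satisfies |N_T(c')| ≥ 2}| ≤ 1. Then there exists v* ∈ N_T(c*) such that the IPA run on (y, A) yields μ^{(1)}_{v*} = 1 = (1_T)_{v*}; in particular, T is not a termatiko set of A. -/

import Mathlib

open scoped Classical
open Finset

variable {C V : Type*} [Fintype C] [Fintype V]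

/-- The IPA lower/upper bounds `(μ^{(ℓ)}, M^{(ℓ)})` computed from measurement
matrix `A` and measurement vector `y`. -/
noncomputable def ipa (A : C → V → ℝ) (y : C → ℝ) : ℕ → (V → ℝ) × (V → ℝ)
  | 0 => (fun _ => 0,
      fun v => sInf {r : ℝ | ∃ c, A c v ≠ 0 ∧ r = y c / A c v})
  | ℓ + 1 =>
      (fun v => sSup {r : ℝ | ∃ c, A c v ≠ 0 ∧
          r = max 0 ((y c - ∑ v' ∈ Finset.univ.filter (fun v' => v' ≠ v),
              A c v' * (ipa A y ℓ).2 v') / A c v)},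
       fun v => sInf {r : ℝ | ∃ c, A c v ≠ 0 ∧
          r = (y c - ∑ v' ∈ Finset.univ.filter (fun v' => v' ≠ v),
              A c v' * (ipa A y ℓ).1 v') / A c v})

/-- IPA lower bound `μ^{(ℓ)}_v`. -/
noncomputable def ipaMu (A : C → V → ℝ) (y : C → ℝ) (ℓ : ℕ) (v : V) : ℝ := (ipa A y ℓ).1 v

/-- IPA upper bound `M^{(ℓ)}_v`. -/
noncomputable def ipaM (A : C → V → ℝ) (y : C → ℝ) (ℓ : ℕ) (v : V) : ℝ := (ipa A y ℓ).2 v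

/-- Neighbourhood `N(v)` of a variable node. -/
noncomputable def Nv (A : C → V → ℝ) (v : V) : Finset C := Finset.univ.filter fun c => A c v ≠ 0

/-- Neighbourhood `N(c)` of a measurement node. -/
noncomputable def Nc (A : C → V → ℝ) (c : C) : Finset V := Finset.univ.filter fun v => A c v ≠ 0

/-- Neighbourhood `N(T)` of a set of variable nodes. -/
noncomputable def NT (A : C → V → ℝ) (T : Finset V) : Finset C :=
  Finset.univ.filter fun c => ∃ v ∈ T, A c v ≠ 0

/-- `N_T(c) = N(c) ∩ T`. -/
noncomputable def NTc (A : C → V → ℝ) (T : Finset V) (c : C) : Finset V :=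
  T.filter fun v => A c v ≠ 0

/-- A stopping set: every neighbouring measurement node is connected at least twice to `T`. -/
def StoppingSet (A : C → V → ℝ) (T : Finset V) : Prop :=
  ∀ c ∈ NT A T, 2 ≤ (NTc A T c).card

/-- The set `S` of variable nodes outside `T` connected only to `N(T)`. -/
noncomputable def Sset (A : C → V → ℝ) (T : Finset V) : Finset V :=
  Finset.univ.filter fun v => v ∉ T ∧ ∀ c, A c v ≠ 0 → c ∈ NT A T

/-- The termatiko condition on a set `T` of variable nodes. -/
def TermatikoCond (A : C → V → ℝ) (T : Finset V) : Prop :=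
  ∀ c ∈ NT A T,
    (∃ v ∈ Sset A T, A c v ≠ 0) ∨
    2 ≤ ((NTc A T c).filter fun v => ∀ c', A c' v ≠ 0 → 2 ≤ (NTc A T c').card).card

/-- Real-valued indicator vector `1_T` of a set of variable nodes. -/
noncomputable def indVec (T : Finset V) : V → ℝ := fun v => if v ∈ T then 1 else 0

/-- The measurement vector `A · 1_T`. -/
noncomputable def measT (A : C → V → ℝ) (T : Finset V) : C → ℝ :=
  fun c => ∑ v, A c v * indVec T v

/-- `T` is a termatiko set of `A`: the IPA run on `A · 1_T` keeps all lower bounds at zero. -/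
def IsTermatiko (A : C → V → ℝ) (T : Finset V) : Prop :=
  ∀ (ℓ : ℕ) (v : V), ipaMu A (measT A T) ℓ v = 0

/-- `A` is a binary (0/1) matrix. -/
def Binary (A : C → V → ℝ) : Prop := ∀ c v, A c v = 0 ∨ A c v = 1

/-- `A` has no all-zero column. -/
def NoZeroCol (A : C → V → ℝ) : Prop := ∀ v, ∃ c, A c v ≠ 0

/-- `A` has nonnegative entries. -/
def MatNonneg (A : C → V → ℝ) : Prop := ∀ c v, 0 ≤ A c v

/-!
Since `A` is binary, `y_c = |N_T(c)|`, so `M⁰_v ≤ |N_T(c)|` for every `c ∈ N(v)`. Every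
`v ≠ v*` in `N(c*)` therefore starts with `M⁰_v ≤ (1_T)_v`: inside `T` it has a neighbour `c'`
with `|N_T(c')| ≤ 1`, and outside `T` it is not in `S`, so it has a neighbour outside `N(T)`,
where `y = 0`. The message from `c*` then gives `μ¹_{v*} ≥ (1_T)_{v*} = 1`, while the IPA
bounds always enclose `1_T`.
-/

lemma Finset.exists_mem_forall_mem_of_card_filter_le_one {α : Type*} {s : Finset α}
    {p : α → Prop} [DecidablePred p] (hs : s.Nonempty) (h : #(s.filter p) ≤ 1) :
    ∃ a ∈ s, ∀ b ∈ s, p b → b = a := by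
  rcases (s.filter p).eq_empty_or_nonempty with hempty | ⟨a, ha⟩
  · obtain ⟨a, ha⟩ := hs
    exact ⟨a, ha, fun b hb hpb => absurd (mem_filter.2 ⟨hb, hpb⟩) (by simp [hempty])⟩
  · exact ⟨a, (mem_filter.1 ha).1, fun b hb hpb =>
      card_le_one.1 h b (mem_filter.2 ⟨hb, hpb⟩) a ha⟩

section Bounds

variable {C V : Type*} [Fintype V]

/-- With `z = M^{(ℓ-1)}` this is `μ^{(ℓ)}_{c→v}` before clipping at `0`; with `z = μ^{(ℓ-1)}` it is
`M^{(ℓ)}_{c→v}`. -/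
noncomputable def ipaMsg (A : C → V → ℝ) (y : C → ℝ) (c : C) (v : V) (z : V → ℝ) : ℝ :=
  (y c - ∑ v' ∈ univ.filter (fun v' => v' ≠ v), A c v' * z v') / A c v

variable {A : C → V → ℝ} {y : C → ℝ} {c : C} {v : V}

lemma ipaMu_zero (A : C → V → ℝ) (y : C → ℝ) (v : V) : ipaMu A y 0 v = 0 := rfl

lemma ipaM_zero (A : C → V → ℝ) (y : C → ℝ) (v : V) :
    ipaM A y 0 v = sInf {r : ℝ | ∃ c, A c v ≠ 0 ∧ r = y c / A c v} := rfl

lemma ipaMu_succ (A : C → V → ℝ) (y : C → ℝ) (ℓ : ℕ) (v : V) :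
    ipaMu A y (ℓ + 1) v =
      sSup {r : ℝ | ∃ c, A c v ≠ 0 ∧ r = max 0 (ipaMsg A y c v (ipaM A y ℓ))} := rfl

lemma ipaM_succ (A : C → V → ℝ) (y : C → ℝ) (ℓ : ℕ) (v : V) :
    ipaM A y (ℓ + 1) v = sInf {r : ℝ | ∃ c, A c v ≠ 0 ∧ r = ipaMsg A y c v (ipaMu A y ℓ)} := rfl

lemma finite_setOf_exists_eq [Finite C] (f : C → ℝ) (p : C → Prop) :
    {r : ℝ | ∃ c, p c ∧ r = f c}.Finite :=
  (Set.finite_range f).subset (by rintro r ⟨c, _, rfl⟩; exact ⟨c, rfl⟩)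

lemma ipaM_zero_le [Finite C] (hc : A c v ≠ 0) : ipaM A y 0 v ≤ y c / A c v :=
  csInf_le (finite_setOf_exists_eq _ _).bddBelow ⟨c, hc, rfl⟩

lemma le_ipaMu_succ [Finite C] (ℓ : ℕ) (hc : A c v ≠ 0) :
    ipaMsg A y c v (ipaM A y ℓ) ≤ ipaMu A y (ℓ + 1) v :=
  (le_max_right _ _).trans <|
    le_csSup (finite_setOf_exists_eq _ _).bddAbove ⟨c, hc, rfl⟩

variable {x : V → ℝ}

lemma sum_ne_mul_le_sum_ne_mul (hA : MatNonneg A) {z w : V → ℝ}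
    (h : ∀ v' ≠ v, A c v' ≠ 0 → z v' ≤ w v') :
    ∑ v' ∈ univ.filter (fun v' => v' ≠ v), A c v' * z v'
      ≤ ∑ v' ∈ univ.filter (fun v' => v' ≠ v), A c v' * w v' := by
  refine sum_le_sum fun v' hv' => ?_
  by_cases hcv' : A c v' = 0
  · simp [hcv']
  · exact mul_le_mul_of_nonneg_left (h v' (mem_filter.1 hv').2 hcv') (hA c v')

lemma eq_add_sum_ne_mul (hy : ∀ c, y c = ∑ v, A c v * x v) (c : C) (v : V) :
    y c = A c v * x v + ∑ v' ∈ univ.filter (fun v' => v' ≠ v), A c v' * x v' := by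
  rw [hy, filter_ne']
  exact (add_sum_erase _ _ (mem_univ v)).symm

lemma ipaMsg_le (hA : MatNonneg A) (hy : ∀ c, y c = ∑ v, A c v * x v) (hc : A c v ≠ 0)
    {z : V → ℝ} (hz : ∀ v' ≠ v, A c v' ≠ 0 → x v' ≤ z v') : ipaMsg A y c v z ≤ x v := by
  have hpos : 0 < A c v := (hA c v).lt_of_ne' hc
  rw [ipaMsg, div_le_iff₀ hpos]
  linarith [eq_add_sum_ne_mul hy c v, sum_ne_mul_le_sum_ne_mul hA hz]

lemma le_ipaMsg (hA : MatNonneg A) (hy : ∀ c, y c = ∑ v, A c v * x v) (hc : A c v ≠ 0)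
    {z : V → ℝ} (hz : ∀ v' ≠ v, A c v' ≠ 0 → z v' ≤ x v') : x v ≤ ipaMsg A y c v z := by
  have hpos : 0 < A c v := (hA c v).lt_of_ne' hc
  rw [ipaMsg, le_div_iff₀ hpos]
  linarith [eq_add_sum_ne_mul hy c v, sum_ne_mul_le_sum_ne_mul hA hz]

/-- A node with no measurement gets the junk upper bound `sInf ∅ = 0`, hence the restriction
to `A c v ≠ 0`. -/
theorem ipa_bounds (hA : MatNonneg A) (hx : ∀ v, 0 ≤ x v) (hy : ∀ c, y c = ∑ v, A c v * x v)
    (ℓ : ℕ) : (∀ v, ipaMu A y ℓ v ≤ x v) ∧ ∀ c v, A c v ≠ 0 → x v ≤ ipaM A y ℓ v := by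
  induction ℓ with
  | zero =>
    refine ⟨fun v => (ipaMu_zero A y v).trans_le (hx v), fun c v hc => ?_⟩
    rw [ipaM_zero]
    refine le_csInf ⟨_, c, hc, rfl⟩ ?_
    rintro _ ⟨c', hc', rfl⟩
    simpa [ipaMsg] using le_ipaMsg (z := 0) hA hy hc' fun v' _ _ => hx v'
  | succ ℓ ih =>
    refine ⟨fun v => ?_, fun c v hc => ?_⟩
    · rw [ipaMu_succ]
      refine Real.sSup_le ?_ (hx v)
      rintro _ ⟨c', hc', rfl⟩
      exact max_le (hx v) (ipaMsg_le hA hy hc' fun v' _ hv' => ih.2 c' v' hv')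
    · rw [ipaM_succ]
      refine le_csInf ⟨_, c, hc, rfl⟩ ?_
      rintro _ ⟨c', hc', rfl⟩
      exact le_ipaMsg hA hy hc' fun v' _ _ => ih.1 v'

theorem ipaMu_succ_eq [Finite C] (hA : MatNonneg A) (hx : ∀ v, 0 ≤ x v)
    (hy : ∀ c, y c = ∑ v, A c v * x v) {ℓ : ℕ} (hc : A c v ≠ 0)
    (hM : ∀ v' ≠ v, A c v' ≠ 0 → ipaM A y ℓ v' ≤ x v') :
    ipaMu A y (ℓ + 1) v = x v :=
  le_antisymm ((ipa_bounds hA hx hy (ℓ + 1)).1 v)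
    ((le_ipaMsg hA hy hc hM).trans (le_ipaMu_succ ℓ hc))

end Bounds

section Binary

variable {C V : Type*} {A : C → V → ℝ} {T : Finset V} {c : C} {v : V}

lemma Binary.matNonneg (hbin : Binary A) : MatNonneg A := fun c v => by
  rcases hbin c v with h | h <;> simp [h]

lemma indVec_nonneg (T : Finset V) (v : V) : 0 ≤ indVec T v := by
  unfold indVec; split_ifs <;> norm_num

lemma mem_NT_iff [Fintype C] : c ∈ NT A T ↔ (NTc A T c).Nonempty := by
  simp [NT, NTc, Finset.Nonempty]

lemma measT_eq_card [Fintype V] (hbin : Binary A) (T : Finset V) (c : C) :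
    measT A T c = #(NTc A T c) := by
  have h : ∀ v, A c v * indVec T v = if v ∈ NTc A T c then 1 else 0 := fun v => by
    rcases hbin c v with h | h <;> simp [NTc, indVec, h]
  rw [measT, sum_congr rfl fun v _ => h v, sum_boole, filter_mem_eq_inter, univ_inter]

lemma ipaM_zero_le_card [Fintype C] [Fintype V] (hbin : Binary A) (hc : A c v ≠ 0) :
    ipaM A (measT A T) 0 v ≤ #(NTc A T c) := by
  simpa [(hbin c v).resolve_left hc, measT_eq_card hbin] using ipaM_zero_le (y := measT A T) hc

lemma exists_not_mem_NT_of_not_mem_Sset [Fintype C] [Fintype V] (hvT : v ∉ T)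
    (hvS : v ∉ Sset A T) :
    ∃ c, A c v ≠ 0 ∧ c ∉ NT A T := by
  by_contra! h
  exact hvS (mem_filter.2 ⟨mem_univ v, hvT, h⟩)

lemma ipaM_zero_le_indVec [Fintype C] [Fintype V] (hbin : Binary A)
    (hcS : ∀ v ∈ Sset A T, A c v = 0) (hc : A c v ≠ 0)
    (hv : ¬(v ∈ NTc A T c ∧ ∀ c', A c' v ≠ 0 → 2 ≤ #(NTc A T c'))) :
    ipaM A (measT A T) 0 v ≤ indVec T v := by
  by_cases hvT : v ∈ T
  · obtain ⟨c', hc', hcard⟩ : ∃ c', A c' v ≠ 0 ∧ #(NTc A T c') < 2 := by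
      by_contra! h
      exact hv ⟨mem_filter.2 ⟨hvT, hc⟩, h⟩
    have hcard' : (#(NTc A T c') : ℝ) ≤ 1 := by exact_mod_cast Nat.le_of_lt_succ hcard
    simpa [indVec, hvT] using (ipaM_zero_le_card hbin hc').trans hcard'
  · obtain ⟨c', hc', hc'T⟩ :=
      exists_not_mem_NT_of_not_mem_Sset hvT fun hvS => hc (hcS v hvS)
    have hempty : NTc A T c' = ∅ := not_nonempty_iff_eq_empty.1 (mt mem_NT_iff.2 hc'T)
    simpa [indVec, hvT, hempty] using ipaM_zero_le_card (T := T) hbin hc'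

end Binary

theorem not_termatiko_of_bad_check_general {m n : ℕ} (A : Fin m → Fin n → ℝ)
    (hbin : Binary A) (T : Finset (Fin n))
    (cs : Fin m) (hcs : cs ∈ NT A T)
    (hcsS : ∀ v ∈ Sset A T, A cs v = 0)
    (hone : ((NTc A T cs).filter fun v => ∀ c', A c' v ≠ 0 → 2 ≤ (NTc A T c').card).card ≤ 1) :
    (∃ vs ∈ NTc A T cs,
        ipaMu A (measT A T) 1 vs = 1 ∧ indVec T vs = 1) ∧
      ¬ IsTermatiko A T := by
  obtain ⟨vs, hvs, hvs_unique⟩ :=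
    exists_mem_forall_mem_of_card_filter_le_one (mem_NT_iff.1 hcs) hone
  obtain ⟨hvsT, hcsvs⟩ := mem_filter.1 hvs
  have hrec : ipaMu A (measT A T) 1 vs = indVec T vs :=
    ipaMu_succ_eq hbin.matNonneg (indVec_nonneg T) (fun _ => rfl) hcsvs fun v' hne hcsv' =>
      ipaM_zero_le_indVec hbin hcsS hcsv' fun hv' => hne (hvs_unique v' hv'.1 hv'.2)
  have hind : indVec T vs = 1 := if_pos hvsT
  refine ⟨⟨vs, hvs, hrec.trans hind, hind⟩, fun hterm => ?_⟩
  have h0 := hterm 1 vs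
  rw [hrec, hind] at h0
  exact one_ne_zero h0

/-- if some `c* ∈ N(T)` is not connected to `S` and at most one
`v ∈ N_T(c*)` has all its neighbours connected at least twice to `T`, then the
IPA (run on `A·1_T`) recovers some `v* ∈ N_T(c*)` already at iteration 1;
in particular `T` is not a termatiko set. -/
theorem not_termatiko_of_bad_check {m n : ℕ} (A : Fin m → Fin n → ℝ)
    (hbin : Binary A) (hcol : NoZeroCol A) (T : Finset (Fin n))
    (cs : Fin m) (hcs : cs ∈ NT A T)
    (hcsS : ∀ v ∈ Sset A T, A cs v = 0)
    (hone : ((NTc A T cs).filter fun v => ∀ c', A c' v ≠ 0 → 2 ≤ (NTc A T c').card).card ≤ 1) :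
    (∃ vs ∈ NTc A T cs,
        ipaMu A (measT A T) 1 vs = 1 ∧ indVec T vs = 1) ∧
      ¬ IsTermatiko A T :=
  not_termatiko_of_bad_check_general A hbin T cs hcs hcsS hone
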